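/- For all integers λ ≥ μ ≥ 0, the identity (1:u)_λ·(1:u)_μ·w_λ·w_μ = Σ_{ν=0}^{μ} [λ+μ−2ν; μ−ν]·(1:u)_ν·(1:u)_{λ+μ−2ν}·w_{λ+μ−2ν} holds in the Laurent polynomial ring ℚ(u)[z, z^{−1}] over the field of rational functions ℚ(u). -/
import Mathlib


open Polynomial Finset

/-- The Gaussian binomial coefficient `[n; k] ∈ ℤ[u]`, defined as
`∏_{i=1}^{k} (1 − u^{n−i+1})/(1 − u^i)` for `0 ≤ k ≤ n`, and `0` otherwise. -/
noncomputable def gb (n : ℕ) (k : ℤ) : Polynomial ℤ :=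
  if 0 ≤ k ∧ k ≤ (n : ℤ) then
    (∏ i ∈ Finset.Icc 1 k.toNat, ((X : Polynomial ℤ) ^ (n - i + 1) - 1)) /ₘ
      (∏ i ∈ Finset.Icc 1 k.toNat, ((X : Polynomial ℤ) ^ i - 1))
  else 0

/-- The canonical embedding `ℤ[u] → ℚ(u)`. -/
noncomputable def iQ : Polynomial ℤ →+* RatFunc ℚ :=
  (algebraMap (Polynomial ℚ) (RatFunc ℚ)).comp (Polynomial.mapRingHom (Int.castRingHom ℚ))

/-- `(1:u)_n := ∏_{i=1}^{n} (1 − u^i)⁻¹` in `ℚ(u)`. -/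
noncomputable def poch (n : ℕ) : RatFunc ℚ :=
  ∏ i ∈ Finset.Icc 1 n, (1 - RatFunc.X ^ i)⁻¹

/-- `w_λ := Σ_{p=0}^{λ} [λ; p]·z^{λ−2p}`, viewed in `ℚ(u)[z, z⁻¹]`. -/
noncomputable def wloc (l : ℕ) : LaurentPolynomial (RatFunc ℚ) :=
  ∑ p ∈ Finset.range (l + 1),
    LaurentPolynomial.C (iQ (gb l p)) * LaurentPolynomial.T ((l : ℤ) - 2 * p)



/-- q-binomial via q-Pascal recursion. -/
noncomputable def Q : ℕ → ℕ → Polynomial ℤ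
  | _, 0 => 1
  | 0, _+1 => 0
  | n+1, k+1 => Q n k + X^(k+1) * Q n (k+1)

@[simp] lemma Q_zero_right (n : ℕ) : Q n 0 = 1 := by cases n <;> rfl

lemma Q_succ_succ (n k : ℕ) : Q (n+1) (k+1) = Q n k + X^(k+1) * Q n (k+1) := rfl

lemma Q_eq_zero_of_lt : ∀ {n k : ℕ}, n < k → Q n k = 0 := by
  intro n
  induction n with
  | zero => intro k hk; cases k with
    | zero => omega
    | succ k => rfl
  | succ n ih =>
    intro k hk
    cases k with
    | zero => omega
    | succ k =>
      rw [Q_succ_succ, ih (by omega), ih (by omega)]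
      ring

@[simp] lemma Q_self : ∀ n : ℕ, Q n n = 1 := by
  intro n
  induction n with
  | zero => rfl
  | succ n ih => rw [Q_succ_succ, ih, Q_eq_zero_of_lt (by omega)]; ring

/-- Key identity B: `(X^(n−k) − 1) [n;k] = (X^(k+1) − 1) [n;k+1]`. -/
lemma Q_B : ∀ (n k : ℕ), (X^(n-k) - 1) * Q n k = (X^(k+1) - 1) * Q n (k+1) := by
  intro n
  induction n with
  | zero =>
    intro k
    cases k with
    | zero => simp [Q_eq_zero_of_lt]
    | succ k => simp [Q_eq_zero_of_lt]
  | succ n ih =>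
    intro k
    cases k with
    | zero =>
      have h := ih 0
      simp only [Nat.sub_zero] at h ⊢
      rw [Q_succ_succ]
      simp only [Q_zero_right] at h ⊢
      have e : (X:Polynomial ℤ)^(n+1) = X * X^n := by ring
      rw [e]
      linear_combination X * h
    | succ k =>
      rcases le_or_gt (k+1) n with hkn | hkn
      · -- main case: k+1 ≤ n
        obtain ⟨d, rfl⟩ : ∃ d, n = k + 1 + d := ⟨n - (k+1), by omega⟩
        have h1 := ih k
        have h2 := ih (k+1)
        have e1 : k + 1 + d - k = d + 1 := by omega
        have e2 : k + 1 + d - (k+1) = d := by omega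
        rw [e1] at h1
        rw [e2] at h2
        rw [Q_succ_succ, Q_succ_succ]
        have e3 : k + 1 + d + 1 - (k + 1) = d + 1 := by omega
        rw [e3]
        linear_combination h1 + X^(k+2) * h2
      · rcases Nat.eq_or_lt_of_le (Nat.succ_le_of_lt hkn) with he | hl
        · have hn : n = k := by omega
          subst hn
          rw [Nat.sub_self, Q_eq_zero_of_lt (show n+1 < n+2 by omega)]
          simp
        · rw [Q_eq_zero_of_lt (by omega), Q_eq_zero_of_lt (by omega)]
          ring

/-- C1: `(1 − X^(k+1)) [M+1;k+1] = (1 − X^(M+1)) [M;k]` for `k ≤ M`. -/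
lemma Q_C1 (M k : ℕ) (h : k ≤ M) :
    (1 - X^(k+1)) * Q (M+1) (k+1) = (1 - X^(M+1)) * Q M k := by
  obtain ⟨d, rfl⟩ : ∃ d, M = k + d := ⟨M - k, by omega⟩
  have hB := Q_B (k+d) k
  have e : k + d - k = d := by omega
  rw [e] at hB
  rw [Q_succ_succ]
  linear_combination X^(k+1) * hB

/-- D: main q-identity. -/
lemma Q_D (M k v : ℕ) (h : k ≤ M) :
    (1 - X^(k+v+1)) * Q (M+1) (k+1)
      = (1 - X^(M+1)) * Q M k + (1 - X^v) * (Q (M+2) (k+1) - Q (M+1) k) := by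
  have hP : Q (M+2) (k+1) = Q (M+1) k + X^(k+1) * Q (M+1) (k+1) := Q_succ_succ (M+1) k
  linear_combination Q_C1 M k h - (1 - X^v) * hP

/-- F: coefficient identity for the three-term recurrence. -/
lemma Q_F (l p : ℕ) (h : p ≤ l + 1) :
    Q (l+1) (p+1) + Q (l+1) p = Q (l+2) (p+1) + (1 - X^(l+1)) * Q l p := by
  rcases le_or_gt p l with hp | hp
  · have hP : Q (l+2) (p+1) = Q (l+1) p + X^(p+1) * Q (l+1) (p+1) := Q_succ_succ (l+1) p
    linear_combination Q_C1 l p hp - hP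
  · have hpl : p = l + 1 := by omega
    subst hpl
    rw [Q_eq_zero_of_lt (show l+1 < l+2 by omega), Q_eq_zero_of_lt (show l < l+1 by omega),
      Q_self, show l+1+1 = l+2 from rfl, Q_self]
    ring

/-- The numerator product factors as `Q n p` times the denominator product. -/
lemma num_eq_Q_mul_den (n : ℕ) : ∀ p : ℕ, p ≤ n →
    (∏ i ∈ Finset.Icc 1 p, ((X : Polynomial ℤ) ^ (n - i + 1) - 1))
      = Q n p * ∏ i ∈ Finset.Icc 1 p, ((X : Polynomial ℤ) ^ i - 1) := by
  intro p
  induction p with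
  | zero => simp
  | succ p ih =>
    intro hp
    rw [Finset.prod_Icc_succ_top (by omega), Finset.prod_Icc_succ_top (by omega),
      ih (by omega)]
    have hB := Q_B n p
    have e : n - (p+1) + 1 = n - p := by omega
    rw [e]
    linear_combination (∏ i ∈ Finset.Icc 1 p, ((X : Polynomial ℤ) ^ i - 1)) * hB

lemma den_monic (p : ℕ) : (∏ i ∈ Finset.Icc 1 p, ((X : Polynomial ℤ) ^ i - 1)).Monic := by
  apply monic_prod_of_monic
  intro i hi
  simp only [Finset.mem_Icc] at hi
  have : ((1 : Polynomial ℤ) : Polynomial ℤ) = C 1 := by simp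
  have := monic_X_pow_sub_C (1 : ℤ) (show i ≠ 0 by omega)
  simpa using this

lemma gb_eq_Q (n p : ℕ) (h : p ≤ n) : gb n (p : ℤ) = Q n p := by
  rw [gb, if_pos ⟨Int.natCast_nonneg p, by exact_mod_cast h⟩]
  rw [Int.toNat_natCast, num_eq_Q_mul_den n p h, mul_comm,
    Polynomial.mul_divByMonic_cancel_left _ (den_monic p)]

@[simp] lemma iQ_X : iQ X = RatFunc.X := by
  simp [iQ, RatFunc.algebraMap_X]

lemma e_ne_zero (n : ℕ) (hn : 1 ≤ n) : (1 - RatFunc.X ^ n : RatFunc ℚ) ≠ 0 := by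
  intro h
  have h2 : (RatFunc.X : RatFunc ℚ) ^ n = 1 := by linear_combination -h
  have h3 : (algebraMap (Polynomial ℚ) (RatFunc ℚ)) (X ^ n) =
      (algebraMap (Polynomial ℚ) (RatFunc ℚ)) 1 := by
    simpa [RatFunc.algebraMap_X] using h2
  have h4 : (X : Polynomial ℚ) ^ n = 1 := RatFunc.algebraMap_injective ℚ h3
  have := congrArg natDegree h4
  simp [natDegree_X_pow] at this
  omega

lemma poch_succ (n : ℕ) : poch (n+1) = poch n * (1 - RatFunc.X ^ (n+1))⁻¹ := by
  rw [poch, poch, Finset.prod_Icc_succ_top (by omega)]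

lemma poch_ne_zero (n : ℕ) : poch n ≠ 0 := by
  rw [poch]
  apply Finset.prod_ne_zero_iff.mpr
  intro i hi
  simp only [Finset.mem_Icc] at hi
  exact inv_ne_zero (e_ne_zero i hi.1)

lemma poch_eq (n : ℕ) : poch n = (1 - RatFunc.X ^ (n+1)) * poch (n+1) := by
  rw [poch_succ, mul_comm, mul_assoc, inv_mul_cancel₀ (e_ne_zero (n+1) (by omega)), mul_one]

@[simp] lemma poch_zero : poch 0 = 1 := by simp [poch]

noncomputable abbrev mC : RatFunc ℚ →+* LaurentPolynomial (RatFunc ℚ) := LaurentPolynomial.C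
noncomputable abbrev mT : ℤ → LaurentPolynomial (RatFunc ℚ) := LaurentPolynomial.T

/-- Canonical sums `∑ mC (c p) * mT (t - 2p)`. -/
noncomputable def Sc (n : ℕ) (c : ℕ → RatFunc ℚ) (t : ℤ) : LaurentPolynomial (RatFunc ℚ) :=
  ∑ p ∈ Finset.range n, mC (c p) * mT (t - 2*p)

lemma Sc_mul_T (n : ℕ) (c : ℕ → RatFunc ℚ) (t j : ℤ) :
    Sc n c t * mT j = Sc n c (t + j) := by
  rw [Sc, Sc, Finset.sum_mul]
  refine Finset.sum_congr rfl fun p _ => ?_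
  rw [LaurentPolynomial.mul_T_assoc]
  congr 1
  ring

lemma Sc_peel0 (n : ℕ) (c : ℕ → RatFunc ℚ) (t : ℤ) :
    Sc (n+1) c t = mC (c 0) * mT t + Sc n (fun p => c (p+1)) (t - 2) := by
  rw [Sc, Sc, Finset.sum_range_succ', add_comm]
  congr 1
  · congr 1; push_cast; ring
  · refine Finset.sum_congr rfl fun p _ => ?_
    congr 1
    push_cast; ring

lemma Sc_peel_top (n : ℕ) (c : ℕ → RatFunc ℚ) (t : ℤ) :
    Sc (n+1) c t = Sc n c t + mC (c n) * mT (t - 2*n) :=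
  Finset.sum_range_succ _ _

lemma Sc_add (n : ℕ) (c c' : ℕ → RatFunc ℚ) (t : ℤ) :
    Sc n c t + Sc n c' t = Sc n (fun p => c p + c' p) t := by
  rw [Sc, Sc, Sc, ← Finset.sum_add_distrib]
  refine Finset.sum_congr rfl fun p _ => ?_
  rw [← add_mul, ← map_add]

lemma Sc_congr {c c' : ℕ → RatFunc ℚ} {n : ℕ} {t : ℤ} (h : ∀ p, p < n → c p = c' p) :
    Sc n c t = Sc n c' t :=
  Finset.sum_congr rfl fun p hp => by rw [h p (Finset.mem_range.mp hp)]

lemma Sc_const_mul (a : RatFunc ℚ) (n : ℕ) (c : ℕ → RatFunc ℚ) (t : ℤ) :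
    mC a * Sc n c t = Sc n (fun p => a * c p) t := by
  rw [Sc, Sc, Finset.mul_sum]
  refine Finset.sum_congr rfl fun p _ => ?_
  rw [← mul_assoc, ← map_mul]

lemma wloc_Sc (l : ℕ) : wloc l = Sc (l+1) (fun p => iQ (Q l p)) (l : ℤ) := by
  rw [wloc, Sc]
  refine Finset.sum_congr rfl fun p hp => ?_
  rw [gb_eq_Q l p (Nat.lt_succ_iff.mp (Finset.mem_range.mp hp))]

lemma wloc_one : wloc 1 = mT 1 + mT (-1) := by
  rw [wloc_Sc, Sc, Finset.sum_range_succ, Finset.sum_range_one]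
  norm_num [Q_zero_right, Q_self]

/-- Three-term recurrence: `w_{l+1} w_1 = w_{l+2} + (1−u^{l+1}) w_l`. -/
lemma wloc_rec (l : ℕ) :
    wloc (l+1) * wloc 1 = wloc (l+2) + mC (iQ (1 - X^(l+1))) * wloc l := by
  rw [wloc_one, mul_add, wloc_Sc (l+1), Sc_mul_T, Sc_mul_T, wloc_Sc (l+2), wloc_Sc l,
    Sc_const_mul]
  have e1 : ((l+1:ℕ):ℤ) + 1 = ((l+2:ℕ):ℤ) := by push_cast; ring
  have e2 : ((l+1:ℕ):ℤ) + (-1) = (l:ℤ) := by push_cast; ring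
  rw [e1, e2]
  rw [Sc_peel0 (l+1) _ ((l+2:ℕ):ℤ), Sc_peel0 (l+2) _ ((l+2:ℕ):ℤ)]
  have e3 : ((l+2:ℕ):ℤ) - 2 = (l:ℤ) := by push_cast; ring
  rw [e3]
  -- extend the two (l+1)-length sums to length (l+2)
  have hext1 : Sc (l+1) (fun p => iQ (Q (l+1) (p+1))) (l:ℤ)
      = Sc (l+2) (fun p => iQ (Q (l+1) (p+1))) (l:ℤ) := by
    rw [Sc_peel_top (l+1) _ (l:ℤ), Q_eq_zero_of_lt (show l+1 < l+1+1 by omega)]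
    simp
  have hext2 : Sc (l+1) (fun p => iQ (1 - X^(l+1)) * iQ (Q l p)) (l:ℤ)
      = Sc (l+2) (fun p => iQ (1 - X^(l+1)) * iQ (Q l p)) (l:ℤ) := by
    rw [Sc_peel_top (l+1) _ (l:ℤ), Q_eq_zero_of_lt (show l < l+1 by omega)]
    simp
  rw [hext1, hext2]
  simp only [show l+(1+1) = l+2 from rfl, show l+1+1 = l+2 from rfl]
  rw [Q_zero_right, Q_zero_right]
  rw [add_assoc, add_assoc]
  congr 1
  rw [Sc_add, Sc_add]
  refine Sc_congr fun p hp => ?_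
  rw [← map_add, ← map_mul, ← map_add]
  congr 1
  exact Q_F l p (by omega)

lemma wloc_zero : wloc 0 = 1 := by
  rw [wloc_Sc, Sc, Finset.sum_range_one, Q_zero_right, map_one, map_one, one_mul]
  norm_num

lemma iQ_e (n : ℕ) : iQ (1 - X^n) = 1 - RatFunc.X^n := by
  rw [map_sub, map_one, map_pow, iQ_X]

lemma C1Q (M k : ℕ) (h : k ≤ M) :
    (1 - RatFunc.X^(k+1)) * iQ (Q (M+1) (k+1)) = (1 - RatFunc.X^(M+1)) * iQ (Q M k) := by
  simpa [map_mul, map_sub, map_one, map_pow, iQ_X] using congrArg iQ (Q_C1 M k h)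

lemma DQ (M k v : ℕ) (h : k ≤ M) :
    (1 - RatFunc.X^(k+v+1)) * iQ (Q (M+1) (k+1))
      = (1 - RatFunc.X^(M+1)) * iQ (Q M k)
        + (1 - RatFunc.X^v) * (iQ (Q (M+2) (k+1)) - iQ (Q (M+1) k)) := by
  simpa [map_mul, map_add, map_sub, map_one, map_pow, iQ_X] using congrArg iQ (Q_D M k v h)

lemma poch_one : poch 1 = (1 - RatFunc.X)⁻¹ := by
  rw [poch, show Finset.Icc 1 1 = {1} from rfl, Finset.prod_singleton, pow_one]

lemma iQ_Q_one (n : ℕ) : iQ (Q (n+1) 1) = poch 1 * (1 - RatFunc.X^(n+1)) := by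
  have h := C1Q n 0 (Nat.zero_le n)
  rw [Q_zero_right, map_one, mul_one, pow_one] at h
  rw [← h, poch_one, ← mul_assoc,
    inv_mul_cancel₀ (by simpa using e_ne_zero 1 le_rfl), one_mul]

noncomputable def Wf (m : ℕ) : LaurentPolynomial (RatFunc ℚ) := mC (poch m) * wloc m
noncomputable def Acoef (l m v : ℕ) : RatFunc ℚ := iQ (Q (l + m - 2*v) (m - v)) * poch v
noncomputable def Sw (n : ℕ) (a : ℕ → RatFunc ℚ) (N : ℕ) : LaurentPolynomial (RatFunc ℚ) :=
  ∑ v ∈ Finset.range n, mC (a v) * Wf (N - 2*v)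

lemma Sw_peel0 (n : ℕ) (a : ℕ → RatFunc ℚ) (N : ℕ) :
    Sw (n+1) a N = mC (a 0) * Wf N + Sw n (fun v => a (v+1)) (N-2) := by
  rw [Sw, Sw, Finset.sum_range_succ', add_comm]
  congr 1
  · refine Finset.sum_congr rfl fun p _ => ?_
    rw [show N - 2*(p+1) = N - 2 - 2*p by omega]

lemma Sw_peel_top (n : ℕ) (a : ℕ → RatFunc ℚ) (N : ℕ) :
    Sw (n+1) a N = Sw n a N + mC (a n) * Wf (N - 2*n) :=
  Finset.sum_range_succ _ _

lemma Sw_add (n : ℕ) (a a' : ℕ → RatFunc ℚ) (N : ℕ) :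
    Sw n a N + Sw n a' N = Sw n (fun v => a v + a' v) N := by
  rw [Sw, Sw, Sw, ← Finset.sum_add_distrib]
  exact Finset.sum_congr rfl fun p _ => by rw [← add_mul, ← map_add]

lemma Sw_congr {a a' : ℕ → RatFunc ℚ} {n : ℕ} {N : ℕ} (h : ∀ v, v < n → a v = a' v) :
    Sw n a N = Sw n a' N :=
  Finset.sum_congr rfl fun v hv => by rw [h v (Finset.mem_range.mp hv)]

lemma Sw_const_mul (c : RatFunc ℚ) (n : ℕ) (a : ℕ → RatFunc ℚ) (N : ℕ) :
    mC c * Sw n a N = Sw n (fun v => c * a v) N := by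
  rw [Sw, Sw, Finset.mul_sum]
  exact Finset.sum_congr rfl fun p _ => by rw [← mul_assoc, ← map_mul]

lemma Wf_mul (a b : ℕ) : Wf a * Wf b = mC (poch a * poch b) * (wloc a * wloc b) := by
  rw [Wf, Wf, map_mul]; ring

lemma S1' (k : ℕ) :
    Wf (k+1) * Wf 1 = mC (iQ (Q (k+2) 1)) * Wf (k+2) + mC (poch 1) * Wf k := by
  have sa : poch (k+1) * poch 1 = iQ (Q (k+2) 1) * poch (k+2) := by
    rw [iQ_Q_one (k+1)]
    linear_combination poch 1 * poch_eq (k+1)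
  have sb : poch (k+1) * poch 1 * iQ (1 - X^(k+1)) = poch 1 * poch k := by
    rw [iQ_e]
    linear_combination (-poch 1) * poch_eq k
  rw [Wf_mul, wloc_rec k, mul_add]
  congr 1
  · rw [Wf, ← mul_assoc, ← map_mul, sa]
  · rw [Wf, ← mul_assoc, ← mul_assoc, ← map_mul, ← map_mul, sb]

lemma Wf_zero : Wf 0 = 1 := by
  rw [Wf, wloc_zero, poch_zero, mul_one, map_one]

theorem keyS : ∀ m l : ℕ, m ≤ l → Wf l * Wf m = Sw (m+1) (fun v => Acoef l m v) (l+m) := by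
  intro m
  induction m using Nat.twoStepInduction with
  | zero =>
    intro l _
    rw [Wf_zero, Sw, Finset.sum_range_one, Acoef, mul_one]
    simp [Q_zero_right, poch_zero]
  | one =>
    intro l hl
    obtain ⟨k, rfl⟩ : ∃ k, l = k + 1 := ⟨l - 1, by omega⟩
    rw [S1', Sw, Finset.sum_range_succ, Finset.sum_range_one, Acoef, Acoef]
    rw [show k+1+1 - 2*0 = k+2 by omega, show k+1+1 - 2*1 = k by omega,
      show 1 - 0 = 1 by omega, show (1:ℕ) - 1 = 0 by omega, Q_zero_right,
      show k+1+1 = k+2 by omega]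
    rw [poch_zero, mul_one, map_one, one_mul]
  | more m ih ih1 =>
    intro l hl
    have hccval : iQ (Q (m+2) 1) = poch 1 * (1 - RatFunc.X^(m+2)) := iQ_Q_one (m+1)
    have hccne : iQ (Q (m+2) 1) ≠ 0 := by
      rw [hccval]; exact mul_ne_zero (poch_ne_zero 1) (e_ne_zero (m+2) (by omega))
    have h1 : Wf (m+1) * Wf 1 = mC (iQ (Q (m+2) 1)) * Wf (m+2) + mC (poch 1) * Wf m :=
      S1' m
    have key2 : mC (iQ (Q (m+2) 1)) * (Wf l * Wf (m+2))
        = (Wf l * Wf (m+1)) * Wf 1 - mC (poch 1) * (Wf l * Wf m) := by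
      linear_combination (-(Wf l)) * h1
    rw [ih1 l (by omega), ih l (by omega)] at key2
    have hexp : Sw (m+1+1) (fun v => Acoef l (m+1) v) (l+(m+1)) * Wf 1
        = Sw (m+2) (fun v => Acoef l (m+1) v * iQ (Q (l+m+2-2*v) 1)) (l+m+2)
          + Sw (m+2) (fun v => Acoef l (m+1) v * poch 1) (l+m) := by
      rw [Sw, Sw, Sw, Finset.sum_mul, ← Finset.sum_add_distrib]
      refine Finset.sum_congr rfl fun v hv => ?_
      have hv' : v ≤ m+1 := Nat.lt_succ_iff.mp (Finset.mem_range.mp hv)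
      rw [show l + (m+1) - 2*v = (l+m-2*v)+1 by omega, mul_assoc, S1' (l+m-2*v),
        show l+m-2*v+2 = l+m+2-2*v by omega]
      rw [mul_add, ← mul_assoc, ← mul_assoc, ← map_mul, ← map_mul]
    rw [hexp, Sw_const_mul] at key2
    -- scalar identities
    have hhead : iQ (Q (m+2) 1) * Acoef l (m+2) 0
        = Acoef l (m+1) 0 * iQ (Q (l+m+2-2*0) 1) := by
      rw [Acoef, Acoef]
      simp only [Nat.mul_zero, Nat.sub_zero]
      rw [poch_zero, mul_one, mul_one]
      rw [show l+(m+2) = (l+m+1)+1 by omega, show l+(m+1) = l+m+1 by omega,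
        show l+m+2 = (l+m+1)+1 by omega]
      rw [hccval, iQ_Q_one (l+m+1)]
      have hC1 := C1Q (l+m+1) (m+1) (by omega)
      linear_combination poch 1 * hC1
    have htop : iQ (Q (m+2) 1) * Acoef l (m+2) (m+1+1)
        = Acoef l (m+1) (m+1) * poch 1 := by
      rw [Acoef, Acoef]
      rw [show l+(m+2)-2*(m+1+1) = l-m-2 by omega, show (m+2)-(m+1+1) = 0 by omega,
        show l+(m+1)-2*(m+1) = l-m-1 by omega, show (m+1)-(m+1) = 0 by omega,
        Q_zero_right, Q_zero_right, map_one, one_mul, one_mul, hccval,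
        show m+1+1 = m+2 from rfl]
      linear_combination (-poch 1) * poch_eq (m+1)
    have hEgen : ∀ v, v < m+1 →
        iQ (Q (m+2) 1) * Acoef l (m+2) (v+1) + poch 1 * Acoef l m v
          = Acoef l (m+1) (v+1) * iQ (Q (l+m+2-2*(v+1)) 1) + Acoef l (m+1) v * poch 1 := by
      intro v hv
      obtain ⟨M, hM⟩ : ∃ M, l+m-2*v = M+1 := ⟨l+m-2*v-1, by omega⟩
      have hkM : m - v ≤ M := by omega
      rw [Acoef, Acoef, Acoef, Acoef]
      rw [show l+(m+2)-2*(v+1) = M+1 by omega, show (m+2)-(v+1) = (m-v)+1 by omega,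
        show l+(m+1)-2*(v+1) = M by omega, show (m+1)-(v+1) = m-v by omega,
        show l+m+2-2*(v+1) = M+1 by omega, show l+(m+1)-2*v = M+2 by omega,
        show (m+1)-v = (m-v)+1 by omega, hM]
      rw [iQ_Q_one M, hccval]
      have hDQ := DQ M (m-v) (v+1) hkM
      rw [show (m-v)+(v+1)+1 = m+2 by omega] at hDQ
      have hphi := poch_eq v
      linear_combination (poch 1 * poch (v+1)) * hDQ
        + (poch 1 * (iQ (Q (M+1) (m-v)) - iQ (Q (M+2) ((m-v)+1)))) * hphi
    -- the main coefficient-matching computation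
    have main : mC (iQ (Q (m+2) 1)) * Sw (m+2+1) (fun v => Acoef l (m+2) v) (l+(m+2))
        = Sw (m+2) (fun v => Acoef l (m+1) v * iQ (Q (l+m+2-2*v) 1)) (l+m+2)
          + Sw (m+2) (fun v => Acoef l (m+1) v * poch 1) (l+m)
          - Sw (m+1) (fun v => poch 1 * Acoef l m v) (l+m) := by
      rw [Sw_const_mul, show l+(m+2) = l+m+2 by omega]
      rw [Sw_peel0 (m+2) (fun v => iQ (Q (m+2) 1) * Acoef l (m+2) v) (l+m+2),
        show l+m+2-2 = l+m by omega]
      rw [Sw_peel_top (m+1) (fun v => iQ (Q (m+2) 1) * Acoef l (m+2) (v+1)) (l+m)]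
      rw [Sw_peel0 (m+1) (fun v => Acoef l (m+1) v * iQ (Q (l+m+2-2*v) 1)) (l+m+2),
        show l+m+2-2 = l+m by omega]
      rw [Sw_peel_top (m+1) (fun v => Acoef l (m+1) v * poch 1) (l+m)]
      have hmid : Sw (m+1) (fun v => iQ (Q (m+2) 1) * Acoef l (m+2) (v+1)) (l+m)
            + Sw (m+1) (fun v => poch 1 * Acoef l m v) (l+m)
          = Sw (m+1) (fun v => Acoef l (m+1) (v+1) * iQ (Q (l+m+2-2*(v+1)) 1)) (l+m)
            + Sw (m+1) (fun v => Acoef l (m+1) v * poch 1) (l+m) := by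
        rw [Sw_add, Sw_add]
        exact Sw_congr hEgen
      have Hh := congrArg (fun r => mC r * Wf (l+m+2)) hhead
      have Ht := congrArg (fun r => mC r * Wf (l+m-2*(m+1))) htop
      linear_combination Hh + Ht + hmid
    have hfin : mC (iQ (Q (m+2) 1)) * (Wf l * Wf (m+2))
        = mC (iQ (Q (m+2) 1)) * Sw (m+2+1) (fun v => Acoef l (m+2) v) (l+(m+2)) :=
      key2.trans main.symm
    have h2 := congrArg (fun z => mC (iQ (Q (m+2) 1))⁻¹ * z) hfin
    simp only [← mul_assoc, ← map_mul, inv_mul_cancel₀ hccne, map_one, one_mul] at h2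
    exact h2

/-- For all integers `λ ≥ μ ≥ 0`, the identity
`(1:u)_λ·(1:u)_μ·w_λ·w_μ
   = Σ_{ν=0}^{μ} [λ+μ−2ν; μ−ν]·(1:u)_ν·(1:u)_{λ+μ−2ν}·w_{λ+μ−2ν}`
holds in `ℚ(u)[z, z⁻¹]`. -/
theorem stmt_4 (lam mu : ℕ) (h : mu ≤ lam) :
    LaurentPolynomial.C (poch lam * poch mu) * (wloc lam * wloc mu) =
      ∑ nu ∈ Finset.range (mu + 1),
        LaurentPolynomial.C
            (iQ (gb (lam + mu - 2 * nu) ((mu : ℤ) - nu)) * poch nu * poch (lam + mu - 2 * nu)) *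
          wloc (lam + mu - 2 * nu) := by
  have hk := keyS mu lam h
  have hL : LaurentPolynomial.C (poch lam * poch mu) * (wloc lam * wloc mu)
      = Wf lam * Wf mu := by rw [Wf_mul]
  rw [hL, hk, Sw]
  refine Finset.sum_congr rfl fun nu hnu => ?_
  have hnu' : nu ≤ mu := Nat.lt_succ_iff.mp (Finset.mem_range.mp hnu)
  rw [Acoef, Wf, ← mul_assoc, ← map_mul]
  have e : ((mu:ℤ) - nu) = ((mu - nu : ℕ) : ℤ) := by omega
  rw [e]
  rw [gb_eq_Q (lam + mu - 2*nu) (mu - nu) (by omega)]
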